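/- Let p be a prime and let Q : 𝔽_p^n → ℂ be a quadratic average of rank r. Then ‖Q‖_{U^2} ≤ p^{−r/4}. -/

import Mathlib

open scoped BigOperators

instance instNeZeroOfFactPrime (p : ℕ) [hp : Fact p.Prime] : NeZero p :=
  ⟨hp.out.ne_zero⟩

/-- The vector space `𝔽_p^n`. -/
abbrev Vec (p n : ℕ) := Fin n → ZMod p

/-- `ω^t` where `ω = e^{2πi/p}`. -/
noncomputable def omg (p : ℕ) (t : ZMod p) : ℂ :=
  Complex.exp (2 * Real.pi * Complex.I * (t.val : ℂ) / p)

/-- Average of a complex-valued function over a finite type. -/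
noncomputable def avgC {α : Type*} [Fintype α] (f : α → ℂ) : ℂ :=
  (∑ x, f x) / (Fintype.card α : ℂ)

/-- Average of a real-valued function over a finite type. -/
noncomputable def avgR {α : Type*} [Fintype α] (f : α → ℝ) : ℝ :=
  (∑ x, f x) / (Fintype.card α : ℝ)

/-- The Gowers `U²` norm. -/
noncomputable def U2 {p n : ℕ} [NeZero p] (f : Vec p n → ℂ) : ℝ :=
  ‖avgC (fun t : Vec p n × Vec p n × Vec p n =>
    f t.1 * star (f (t.1 + t.2.1)) * star (f (t.1 + t.2.2)) *
      f (t.1 + t.2.1 + t.2.2))‖ ^ ((1 : ℝ) / 4)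

/-- The Gowers `U³` norm. -/
noncomputable def U3 {p n : ℕ} [NeZero p] (f : Vec p n → ℂ) : ℝ :=
  ‖avgC (fun t : Vec p n × Vec p n × Vec p n × Vec p n =>
    f t.1 * star (f (t.1 + t.2.1)) * star (f (t.1 + t.2.2.1)) *
      f (t.1 + t.2.1 + t.2.2.1) * star (f (t.1 + t.2.2.2)) *
      f (t.1 + t.2.1 + t.2.2.2) * f (t.1 + t.2.2.1 + t.2.2.2) *
      star (f (t.1 + t.2.1 + t.2.2.1 + t.2.2.2)))‖ ^ ((1 : ℝ) / 8)

/-- `L¹` norm (with respect to the uniform probability measure). -/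
noncomputable def L1 {p n : ℕ} [NeZero p] (f : Vec p n → ℂ) : ℝ :=
  avgR (fun x => ‖f x‖)

/-- `L²` norm (with respect to the uniform probability measure). -/
noncomputable def L2 {p n : ℕ} [NeZero p] (f : Vec p n → ℂ) : ℝ :=
  Real.sqrt (avgR (fun x => ‖f x‖ ^ 2))

/-- `L∞` norm. -/
noncomputable def Linf {p n : ℕ} [NeZero p] (f : Vec p n → ℂ) : ℝ :=
  ⨆ x, ‖f x‖

/-- Normalized inner product `⟨f,g⟩ = 𝔼_x f(x) conj (g x)`. -/
noncomputable def inprod {p n : ℕ} [NeZero p] (f g : Vec p n → ℂ) : ℂ :=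
  avgC (fun x => f x * star (g x))

/-- The dual of the `U²` norm. -/
noncomputable def U2dual {p n : ℕ} [NeZero p] (g : Vec p n → ℂ) : ℝ :=
  sSup {r : ℝ | ∃ f : Vec p n → ℂ, U2 f ≤ 1 ∧ r = ‖inprod f g‖}

/-- The elements of a submodule of `𝔽_p^n` as a `Finset`. -/
noncomputable def subFinset {p n : ℕ} [NeZero p] (V : Submodule (ZMod p) (Vec p n)) :
    Finset (Vec p n) :=
  letI := Classical.decPred (fun v => v ∈ (V : Set (Vec p n)))
  Finset.univ.filter (fun v => v ∈ (V : Set (Vec p n)))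

/-- Convolution `f * μ_V`, i.e. the average of `f` over the coset `x + V`. -/
noncomputable def convMu {p n : ℕ} [NeZero p] (f : Vec p n → ℂ)
    (V : Submodule (ZMod p) (Vec p n)) (x : Vec p n) : ℂ :=
  (∑ v ∈ subFinset V, f (x + v)) / ((subFinset V).card : ℂ)

/-- The associated symmetric form `β(u,v) = q(u+v) - q(u) - q(v)`. -/
def qbeta {p n : ℕ} (q : Vec p n → ZMod p) (u v : Vec p n) : ZMod p :=
  q (u + v) - q u - q v

/-- `q` is a quadratic form on the subspace `V`: `q 0 = 0` and the associated
form `β` is (bi-)additive on `V`. -/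
def IsQuadFormOn {p n : ℕ} (V : Submodule (ZMod p) (Vec p n))
    (q : Vec p n → ZMod p) : Prop :=
  q 0 = 0 ∧ ∀ u ∈ V, ∀ v ∈ V, ∀ w ∈ V, qbeta q u (v + w) = qbeta q u v + qbeta q u w

/-- The radical `{v ∈ V : β(u,v) = 0 for all u ∈ V}` of the form associated to `q`
(as the span of that set, which equals the set itself when `q` is quadratic). -/
noncomputable def qRadical {p n : ℕ} (V : Submodule (ZMod p) (Vec p n))
    (q : Vec p n → ZMod p) : Submodule (ZMod p) (Vec p n) :=
  Submodule.span (ZMod p) {v | v ∈ V ∧ ∀ u ∈ V, qbeta q u v = 0}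

/-- The rank of the quadratic form `q` on `V`: the codimension in `V` of the radical. -/
noncomputable def qRank {p n : ℕ} (V : Submodule (ZMod p) (Vec p n))
    (q : Vec p n → ZMod p) : ℕ :=
  Module.finrank (ZMod p) V - Module.finrank (ZMod p) (qRadical V q)

/-- `Q` is a quadratic average with base `(V, q)`:
`Q(x) = 𝔼_{y ∈ x+V} ω^{q(x-y) + φ_y(x-y)}` with each `φ_y` linear on `V`.
(Parametrizing `y = x - v` with `v ∈ V`, this reads `Q(x) = 𝔼_{v ∈ V} ω^{q(v) + φ_{x-v}(v)}`.) -/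
def IsQuadAvgWith {p n : ℕ} [NeZero p] (V : Submodule (ZMod p) (Vec p n))
    (q : Vec p n → ZMod p) (Q : Vec p n → ℂ) : Prop :=
  IsQuadFormOn V q ∧
  ∃ φ : Vec p n → Vec p n → ZMod p,
    (∀ y, ∀ u ∈ V, ∀ v ∈ V, φ y (u + v) = φ y u + φ y v) ∧
    ∀ x, Q x = (∑ v ∈ subFinset V, omg p (q v + φ (x - v) v)) / ((subFinset V).card : ℂ)

/-- The radical of a bilinear form `β` restricted to the subspace `W`. -/
noncomputable def bRadical {p n : ℕ} (W : Submodule (ZMod p) (Vec p n))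
    (β : Vec p n →ₗ[ZMod p] Vec p n →ₗ[ZMod p] ZMod p) :
    Submodule (ZMod p) (Vec p n) :=
  Submodule.span (ZMod p) {y | y ∈ W ∧ ∀ x ∈ W, β x y = 0}

/-- The rank of the bilinear form `β` restricted to the subspace `W`. -/
noncomputable def bRankOn {p n : ℕ} (W : Submodule (ZMod p) (Vec p n))
    (β : Vec p n →ₗ[ZMod p] Vec p n →ₗ[ZMod p] ZMod p) : ℕ :=
  Module.finrank (ZMod p) W - Module.finrank (ZMod p) (bRadical W β)

/-! Substituting `x = y + v`, `a ↦ a + u`, `b ↦ b + t` and writing the four offsets as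
`v, v + u, v + t, v + u + t + w` turns `‖Q‖_{U²}⁴` into an average over `(y, a, b, w)` of sums
over `v, u, t ∈ V` in which the four linear phases `φ` are fixed. In such a sum the quadratic
parts combine to `β(v, w) + c(u) + β(t, u + w)`: the sum over `v` is bounded trivially, and the
sum over `t` is a character sum on `V` which vanishes unless `u` lies in a fixed coset of the
radical. This gives `‖Q‖_{U²}⁴ ≤ |rad| / |V| = p^{-r}`. -/

lemma norm_sum_le_card_mul {ι E : Type*} [Fintype ι] [SeminormedAddCommGroup E] {f : ι → E}
    {C : ℝ} (h : ∀ i, ‖f i‖ ≤ C) : ‖∑ i, f i‖ ≤ Fintype.card ι * C := by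
  simpa using norm_sum_le_of_le Finset.univ fun i _ => h i

section omg

variable {p : ℕ} [NeZero p]

lemma omg_eq_stdAddChar (t : ZMod p) : omg p t = ZMod.stdAddChar t := by
  rw [ZMod.stdAddChar_apply, ZMod.toCircle_apply, omg]

lemma omg_add (s t : ZMod p) : omg p (s + t) = omg p s * omg p t := by
  simp only [omg_eq_stdAddChar, AddChar.map_add_eq_mul]

lemma norm_omg (t : ZMod p) : ‖omg p t‖ = 1 := by
  rw [omg_eq_stdAddChar, ZMod.stdAddChar_apply, Circle.norm_coe]

lemma star_omg (t : ZMod p) : star (omg p t) = omg p (-t) := by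
  simp only [omg_eq_stdAddChar, AddChar.map_neg_eq_conj]
  rfl

lemma norm_sum_omg_le {G : Type*} [Fintype G] (f : G → ZMod p) :
    ‖∑ g, omg p (f g)‖ ≤ Fintype.card G := by
  simpa only [norm_omg, mul_one] using norm_sum_le_card_mul fun g => (norm_omg (f g)).le

lemma sum_omg_eq_ite {G : Type*} [AddGroup G] [Fintype G] (f : G →+ ZMod p)
    [Decidable (f = 0)] :
    ∑ g, omg p (f g) = if f = 0 then (Fintype.card G : ℂ) else 0 := by
  have hψ : ZMod.stdAddChar.compAddMonoidHom f = 0 ↔ f = 0 :=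
    (AddChar.compAddMonoidHom_injective_right _ ZMod.injective_stdAddChar).eq_iff'
      (by ext; simp)
  simp only [omg_eq_stdAddChar, ← AddChar.compAddMonoidHom_apply,
    (ZMod.stdAddChar.compAddMonoidHom f).sum_eq_ite, hψ]

end omg

section subFinset

variable {p n : ℕ} [NeZero p] (V : Submodule (ZMod p) (Vec p n)) [Fintype V]

lemma sum_subFinset (f : Vec p n → ℂ) : ∑ v ∈ subFinset V, f v = ∑ v : V, f v :=
  Finset.sum_subtype _ (by simp [subFinset]) f

lemma card_subFinset : (subFinset V).card = Fintype.card V :=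
  (Fintype.card_of_subtype _ (by simp [subFinset])).symm

end subFinset

section QuadForm

variable {p n : ℕ} {V : Submodule (ZMod p) (Vec p n)} {q : Vec p n → ZMod p}

lemma qbeta_comm (q : Vec p n → ZMod p) (u v : Vec p n) : qbeta q u v = qbeta q v u := by
  simp only [qbeta, add_comm u v]
  ring

lemma qRadical_le (V : Submodule (ZMod p) (Vec p n)) (q : Vec p n → ZMod p) :
    qRadical V q ≤ V :=
  Submodule.span_le.2 fun _ hv => hv.1

lemma natCard_qRadical_div_natCard [Fact p.Prime] :
    (Nat.card (qRadical V q) : ℝ) / Nat.card V = (p : ℝ) ^ (-(qRank V q : ℝ)) := by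
  have hle := Submodule.finrank_mono (qRadical_le V q)
  have hp : (0 : ℝ) < p := by exact_mod_cast (Fact.out : p.Prime).pos
  obtain ⟨k, hk⟩ := Nat.exists_eq_add_of_le hle
  rw [Module.natCard_eq_pow_finrank (K := ZMod p) (V := qRadical V q),
    Module.natCard_eq_pow_finrank (K := ZMod p) (V := V), Nat.card_zmod, Real.rpow_neg hp.le,
    Real.rpow_natCast, qRank, hk, Nat.add_sub_cancel_left, pow_add]
  push_cast
  field_simp

namespace IsQuadFormOn

lemma qbeta_add_left (hq : IsQuadFormOn V q) {u v w : Vec p n} (hu : u ∈ V) (hv : v ∈ V)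
    (hw : w ∈ V) : qbeta q (u + v) w = qbeta q u w + qbeta q v w := by
  rw [qbeta_comm, hq.2 w hw u hu v hv, qbeta_comm q w, qbeta_comm q w]

lemma qbeta_sub_right (hq : IsQuadFormOn V q) {u v w : Vec p n} (hu : u ∈ V) (hv : v ∈ V)
    (hw : w ∈ V) : qbeta q u (v - w) = qbeta q u v - qbeta q u w := by
  rw [eq_sub_iff_add_eq, ← hq.2 u hu _ (V.sub_mem hv hw) w hw, sub_add_cancel]

lemma sub_mem_qRadical (hq : IsQuadFormOn V q) (m : Vec p n → ZMod p) {u u' : Vec p n}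
    (hu : u ∈ V) (hu' : u' ∈ V) (h : ∀ t ∈ V, qbeta q t u + m t = 0)
    (h' : ∀ t ∈ V, qbeta q t u' + m t = 0) : u - u' ∈ qRadical V q := by
  refine Submodule.subset_span ⟨V.sub_mem hu hu', fun t ht => ?_⟩
  rw [hq.qbeta_sub_right ht hu hu']
  linear_combination h t ht - h' t ht

lemma natCard_le_natCard_qRadical [NeZero p] (hq : IsQuadFormOn V q) (m : Vec p n → ZMod p) :
    Nat.card {u : V // ∀ t ∈ V, qbeta q t u + m t = 0} ≤ Nat.card (qRadical V q) := by
  rcases isEmpty_or_nonempty {u : V // ∀ t ∈ V, qbeta q t u + m t = 0} with h | ⟨⟨u₀⟩⟩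
  · simp
  exact Nat.card_le_card_of_injective
    (fun u => ⟨u.1 - u₀.1, hq.sub_mem_qRadical m u.1.2 u₀.1.2 u.2 u₀.2⟩) fun u u' h =>
      Subtype.ext <| Subtype.ext <| sub_left_injective (congrArg Subtype.val h)

lemma sum_norm_sum_omg_le [NeZero p] [Fintype V] (hq : IsQuadFormOn V q)
    {m : Vec p n → ZMod p} (hm : ∀ s ∈ V, ∀ t ∈ V, m (s + t) = m s + m t) :
    ∑ u : V, ‖∑ t : V, omg p (qbeta q t u + m t)‖ ≤
      Nat.card (qRadical V q) * Fintype.card V := by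
  classical
  have hterm (u : V) : ‖∑ t : V, omg p (qbeta q t u + m t)‖ =
      if ∀ t ∈ V, qbeta q t u + m t = 0 then (Fintype.card V : ℝ) else 0 := by
    let f : V →+ ZMod p := AddMonoidHom.mk' (fun t => qbeta q t u + m t) fun s t => by
      simp only [Submodule.coe_add, hq.qbeta_add_left s.2 t.2 u.2, hm s s.2 t t.2]
      ring
    have hf : f = 0 ↔ ∀ t ∈ V, qbeta q t u + m t = 0 := by
      simp [f, AddMonoidHom.ext_iff]
    change ‖∑ t, omg p (f t)‖ = _
    simp only [sum_omg_eq_ite, hf, apply_ite norm, norm_zero, Complex.norm_natCast]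
  simp only [hterm]
  rw [Finset.sum_ite, Finset.sum_const_zero, add_zero, Finset.sum_const, nsmul_eq_mul]
  gcongr
  rw [← Fintype.card_subtype, ← Nat.card_eq_fintype_card]
  exact_mod_cast hq.natCard_le_natCard_qRadical m

end IsQuadFormOn

end QuadForm

/-- In the paper's notation, `quadPhase q φ y (x - y) = ω^{q(x-y) + φ_y(x-y)}`. -/
noncomputable def quadPhase {p n : ℕ} (q : Vec p n → ZMod p)
    (φ : Vec p n → Vec p n → ZMod p) (y v : Vec p n) : ℂ :=
  omg p (q v + φ y v)

section Box

variable {p n : ℕ} [NeZero p] {V : Submodule (ZMod p) (Vec p n)} [Fintype V]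
  {q : Vec p n → ZMod p} {φ : Vec p n → Vec p n → ZMod p}

lemma IsQuadFormOn.norm_sum_quadPhase_box_le (hq : IsQuadFormOn V q)
    (hφ : ∀ y, ∀ u ∈ V, ∀ v ∈ V, φ y (u + v) = φ y u + φ y v)
    (y₁ y₂ y₃ y₄ : Vec p n) {w : Vec p n} (hw : w ∈ V) :
    ‖∑ v : V, ∑ u : V, ∑ t : V, quadPhase q φ y₁ v * star (quadPhase q φ y₂ (v + u)) *
        star (quadPhase q φ y₃ (v + t)) * quadPhase q φ y₄ (v + u + t + w)‖ ≤
      Fintype.card V * (Nat.card (qRadical V q) * Fintype.card V) := by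
  set A : Vec p n → ZMod p := fun v => qbeta q v w + φ y₁ v - φ y₂ v - φ y₃ v + φ y₄ v
  set c : Vec p n → ZMod p := fun u => q (u + w) - q u + φ y₄ (u + w) - φ y₂ u
  set m : Vec p n → ZMod p := fun t => φ y₄ t - φ y₃ t
  have hphase {v u t : Vec p n} (hv : v ∈ V) (hu : u ∈ V) (ht : t ∈ V) :
      quadPhase q φ y₁ v * star (quadPhase q φ y₂ (v + u)) *
        star (quadPhase q φ y₃ (v + t)) * quadPhase q φ y₄ (v + u + t + w) =
      omg p (A v) * (omg p (c u) * omg p (qbeta q t (u + w) + m t)) := by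
    have huw : u + w ∈ V := V.add_mem hu hw
    have hβ₁ := hq.2 v hv t ht (u + w) huw
    have hβ₂ := hq.2 v hv u hu w hw
    have hφ₂ := hφ y₂ v hv u hu
    have hφ₃ := hφ y₃ v hv t ht
    have hφ₄ := hφ y₄ v hv (t + (u + w)) (V.add_mem ht huw)
    have hφ₄' := hφ y₄ t ht (u + w) huw
    rw [show v + u + t + w = v + (t + (u + w)) by abel]
    simp only [quadPhase, star_omg, ← omg_add]
    congr 1
    simp only [A, c, m, qbeta] at hβ₁ hβ₂ ⊢
    linear_combination hβ₁ + hβ₂ - hφ₂ - hφ₃ + hφ₄ + hφ₄'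
  have hm : ∀ s ∈ V, ∀ t ∈ V, m (s + t) = m s + m t := fun s hs t ht => by
    simp only [m, hφ y₃ s hs t ht, hφ y₄ s hs t ht]
    ring
  have hfactor : ∑ v : V, ∑ u : V, ∑ t : V, quadPhase q φ y₁ v *
        star (quadPhase q φ y₂ (v + u)) * star (quadPhase q φ y₃ (v + t)) *
        quadPhase q φ y₄ (v + u + t + w) =
      (∑ v : V, omg p (A v)) *
        ∑ u : V, omg p (c u) * ∑ t : V, omg p (qbeta q t (u + w) + m t) := by
    rw [Finset.sum_mul]
    refine Fintype.sum_congr _ _ fun v => ?_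
    rw [Finset.mul_sum]
    refine Fintype.sum_congr _ _ fun u => ?_
    rw [Finset.mul_sum, Finset.mul_sum]
    exact Fintype.sum_congr _ _ fun t => hphase v.2 u.2 t.2
  rw [hfactor, norm_mul]
  refine mul_le_mul (norm_sum_omg_le _) ?_ (norm_nonneg _) (Nat.cast_nonneg _)
  calc ‖∑ u : V, omg p (c u) * ∑ t : V, omg p (qbeta q t (u + w) + m t)‖
      ≤ ∑ u : V, ‖∑ t : V, omg p (qbeta q t (u + w) + m t)‖ :=
        norm_sum_le_of_le _ fun u _ => by rw [norm_mul, norm_omg, one_mul]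
    _ = ∑ u : V, ‖∑ t : V, omg p (qbeta q t u + m t)‖ :=
        Fintype.sum_equiv (Equiv.addRight ⟨w, hw⟩) _ _ fun u => by
          rw [Equiv.coe_addRight, Submodule.coe_add]
    _ ≤ _ := hq.sum_norm_sum_omg_le hm

end Box

section Reparam

variable {p n : ℕ} (V : Submodule (ZMod p) (Vec p n))

/-- The substitution that turns the base points `x - v₁, x + a - v₂, x + b - v₃,
x + a + b - v₄` of the four factors of the `U²` box into `y, y + a, y + b, y + a + b - w`. -/
def boxReparam : ((Vec p n × Vec p n × Vec p n) × V) × V × V × V ≃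
    (Vec p n × Vec p n × Vec p n) × V × V × V × V where
  toFun := fun (((y, a, b), w), v, u, t) =>
    ((y + v, a + u, b + t), v, v + u, v + t, v + u + t + w)
  invFun := fun ((x, a, b), v₁, v₂, v₃, v₄) =>
    (((x - v₁, a - (v₂ - v₁ : V), b - (v₃ - v₁ : V)), v₄ - v₂ - v₃ + v₁), v₁, v₂ - v₁, v₃ - v₁)
  left_inv := fun (((y, a, b), w), v, u, t) => by
    simp only [Prod.mk.injEq, Submodule.coe_add, Submodule.coe_sub, true_and]
    refine ⟨⟨⟨?_, ?_, ?_⟩, ?_⟩, ?_, ?_⟩ <;> abel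
  right_inv := fun ((x, a, b), v₁, v₂, v₃, v₄) => by
    simp only [Prod.mk.injEq, Submodule.coe_sub, true_and]
    refine ⟨⟨?_, ?_, ?_⟩, ?_, ?_, ?_⟩ <;> abel

variable [Fintype V]

lemma box_eq_sum {F : Vec p n → Vec p n → ℂ} {Q : Vec p n → ℂ}
    (hQ : ∀ x, Q x = (∑ v : V, F (x - v) v) / Fintype.card V) (x a b : Vec p n) :
    Q x * star (Q (x + a)) * star (Q (x + b)) * Q (x + a + b) =
      (∑ v₁ : V, ∑ v₂ : V, ∑ v₃ : V, ∑ v₄ : V, F (x - v₁) v₁ * star (F (x + a - v₂) v₂) *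
        star (F (x + b - v₃) v₃) * F (x + a + b - v₄) v₄) / (Fintype.card V : ℂ) ^ 4 := by
  simp only [hQ, star_div₀, star_sum, star_natCast, div_mul_div_comm, mul_assoc,
    Finset.sum_mul]
  simp only [Finset.mul_sum]
  ring

lemma sum_box_reparam [NeZero p] (F : Vec p n → Vec p n → ℂ) :
    ∑ x, ∑ a, ∑ b, ∑ v₁ : V, ∑ v₂ : V, ∑ v₃ : V, ∑ v₄ : V, F (x - v₁) v₁ *
        star (F (x + a - v₂) v₂) * star (F (x + b - v₃) v₃) * F (x + a + b - v₄) v₄ =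
      ∑ y, ∑ a, ∑ b, ∑ w : V, ∑ v : V, ∑ u : V, ∑ t : V, F y v *
        star (F (y + a) (v + u)) * star (F (y + b) (v + t)) *
        F (y + a + b - w) (v + u + t + w) := by
  have := Fintype.sum_equiv (boxReparam V)
    (fun (((y, a, b), w), v, u, t) => F y v *
        star (F (y + a) (v + u)) * star (F (y + b) (v + t)) * F (y + a + b - w) (v + u + t + w))
    (fun ((x, a, b), v₁, v₂, v₃, v₄) => F (x - v₁) v₁ *
        star (F (x + a - v₂) v₂) * star (F (x + b - v₃) v₃) * F (x + a + b - v₄) v₄)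
    fun (((y, a, b), w), v, u, t) => by
      simp only [boxReparam, Equiv.coe_fn_mk, Submodule.coe_add]
      rw [add_sub_cancel_right, show y + v + (a + u) - (v + u) = y + a by abel,
        show y + v + (b + t) - (v + t) = y + b by abel,
        show y + v + (a + u) + (b + t) - (v + u + t + w) = y + a + b - w by abel]
  simpa only [Fintype.sum_prod_type] using this.symm

end Reparam

lemma IsQuadFormOn.norm_avgC_box_le {p n : ℕ} [NeZero p] {V : Submodule (ZMod p) (Vec p n)}
    [Fintype V] {q : Vec p n → ZMod p} {φ : Vec p n → Vec p n → ZMod p} {Q : Vec p n → ℂ}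
    (hq : IsQuadFormOn V q) (hφ : ∀ y, ∀ u ∈ V, ∀ v ∈ V, φ y (u + v) = φ y u + φ y v)
    (hQ : ∀ x, Q x = (∑ v : V, quadPhase q φ (x - v) v) / Fintype.card V) :
    ‖avgC (fun z : Vec p n × Vec p n × Vec p n => Q z.1 * star (Q (z.1 + z.2.1)) *
        star (Q (z.1 + z.2.2)) * Q (z.1 + z.2.1 + z.2.2))‖ ≤
      Nat.card (qRadical V q) / Fintype.card V := by
  have hbound := norm_sum_le_card_mul fun y => norm_sum_le_card_mul fun a =>
    norm_sum_le_card_mul fun b => norm_sum_le_card_mul fun w : V =>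
      hq.norm_sum_quadPhase_box_le hφ y (y + a) (y + b) (y + a + b - w) w.2
  rw [avgC]
  simp only [Fintype.sum_prod_type, box_eq_sum V hQ, ← Finset.sum_div, sum_box_reparam]
  rw [norm_div, norm_div, norm_pow, Complex.norm_natCast, Complex.norm_natCast,
    Fintype.card_prod, Fintype.card_prod]
  refine (div_le_div_of_nonneg_right (div_le_div_of_nonneg_right hbound (by positivity))
    (by positivity)).trans_eq ?_
  push_cast
  field_simp

/-- Lemma 3.4. A quadratic average of rank `r` has `U²` norm at most
`p^{-r/4}`. -/
theorem stmt6 (p : ℕ) [Fact p.Prime] (n : ℕ) (V : Submodule (ZMod p) (Vec p n))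
    (q : Vec p n → ZMod p) (Q : Vec p n → ℂ) (r : ℕ)
    (hQ : IsQuadAvgWith V q Q) (hr : qRank V q = r) :
    U2 Q ≤ (p : ℝ) ^ (-(r : ℝ) / 4) := by
  obtain ⟨hq, φ, hφ, hQφ⟩ := hQ
  have : Fintype V := Fintype.ofFinite V
  have hQ' (x : Vec p n) : Q x = (∑ v : V, quadPhase q φ (x - v) v) / Fintype.card V := by
    rw [hQφ, sum_subFinset, card_subFinset]
    rfl
  have hbox := hq.norm_avgC_box_le hφ hQ'
  rw [← Nat.card_eq_fintype_card, natCard_qRadical_div_natCard, hr] at hbox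
  rw [U2, show -(r : ℝ) / 4 = -r * (1 / 4) by ring, Real.rpow_mul (Nat.cast_nonneg p)]
  exact Real.rpow_le_rpow (norm_nonneg _) hbox (by norm_num)
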